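/- Let f₁, f₂ be Laurent polynomials in two variables and η ∈ ℤ². For a Laurent polynomial g with support A, let g^η denote the sum of terms of g whose exponent a minimizes ⟨η,a⟩ over A (the initial form). Then the initial form of the toric Jacobian satisfies (J^T_{f₁,f₂})^η = J^T_{f₁^η, f₂^η}, provided J^T_{f₁^η,f₂^η} ≠ 0, where J^T denotes the toric Jacobian x₁x₂·det(∂f_i/∂x_j). -/

import Mathlib

open Finsupp

/-- A Laurent polynomial in two variables over `K`. -/
abbrev LaurentPoly2 (K : Type*) [CommRing K] := AddMonoidAlgebra K (Fin 2 → ℤ)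

/-- The operator `x_i ∂/∂x_i` on Laurent polynomials. -/
noncomputable def xd {K : Type*} [CommRing K] (i : Fin 2)
    (f : LaurentPoly2 K) : LaurentPoly2 K :=
  AddMonoidAlgebra.ofCoeff (f.coeff.sum fun a c => Finsupp.single a ((a i : ℤ) • c))

/-- The toric Jacobian `x₁x₂·det(∂f_i/∂x_j)` of two bivariate Laurent polynomials. -/
noncomputable def toricJacobian {K : Type*} [CommRing K] (f₁ f₂ : LaurentPoly2 K) :
    LaurentPoly2 K :=
  xd 0 f₁ * xd 1 f₂ - xd 1 f₁ * xd 0 f₂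

/-- The initial form `g^η` of a Laurent polynomial `g` with respect to `η`: the subsum
of terms whose exponent minimizes `⟨η,·⟩` over the support of `g`. -/
noncomputable def initialForm {K : Type*} [CommRing K] (η : Fin 2 → ℤ)
    (g : LaurentPoly2 K) : LaurentPoly2 K :=
  AddMonoidAlgebra.ofCoeff (∑ a ∈ g.coeff.support.filter
      (fun a => ∀ b ∈ g.coeff.support, (∑ i, η i * a i) ≤ (∑ i, η i * b i)),
    Finsupp.single a (g.coeff a))

/-!
Write `fᵢ = fᵢ^η + rᵢ`, where every exponent of `fᵢ^η` has `η`-weight `νᵢ` and every exponent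
of `rᵢ` has weight `> νᵢ`. The toric Jacobian is bilinear and its exponents are sums of exponents
of its arguments, so in `J^T_{f₁,f₂} = J^T_{f₁^η,f₂^η} + (J^T_{r₁,f₂^η} + J^T_{f₁,r₂})` the first
summand has exact weight `ν₁ + ν₂` and the second has weight `> ν₁ + ν₂`. A nonzero summand of
exact weight below everything else is the initial form of the sum.
-/

namespace LaurentPoly2

variable {K : Type*} [CommRing K]

section ToricJacobian

lemma coeff_xd (i : Fin 2) (f : LaurentPoly2 K) (a : Fin 2 → ℤ) :
    (xd i f).coeff a = a i • f.coeff a := by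
  classical
  rw [xd, AddMonoidAlgebra.coeff_ofCoeff, Finsupp.sum_apply, Finsupp.sum,
    Finset.sum_eq_single a (fun b _ hb => by simp [hb])
      (fun ha => by simp [notMem_support_iff.mp ha])]
  simp

lemma support_xd_subset (i : Fin 2) (f : LaurentPoly2 K) :
    (xd i f).coeff.support ⊆ f.coeff.support :=
  fun a ha => mem_support_iff.mpr fun h0 => mem_support_iff.mp ha (by rw [coeff_xd, h0, smul_zero])

lemma xd_sub (i : Fin 2) (f g : LaurentPoly2 K) : xd i (f - g) = xd i f - xd i g := by
  ext a
  simp only [AddMonoidAlgebra.coeff_sub, Finsupp.sub_apply, coeff_xd, smul_sub]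

lemma toricJacobian_sub_left (f g h : LaurentPoly2 K) :
    toricJacobian (f - g) h = toricJacobian f h - toricJacobian g h := by
  simp only [toricJacobian, xd_sub]; ring

lemma toricJacobian_sub_right (f g h : LaurentPoly2 K) :
    toricJacobian f (g - h) = toricJacobian f g - toricJacobian f h := by
  simp only [toricJacobian, xd_sub]; ring

open Pointwise in
lemma support_toricJacobian_subset [DecidableEq (Fin 2 → ℤ)] (f g : LaurentPoly2 K) :
    (toricJacobian f g).coeff.support ⊆ f.coeff.support + g.coeff.support := by
  rw [toricJacobian, AddMonoidAlgebra.coeff_sub]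
  refine support_sub.trans (Finset.union_subset ?_ ?_) <;>
    exact (AddMonoidAlgebra.support_coeff_mul_subset _ _).trans
      (Finset.add_subset_add (support_xd_subset _ _) (support_xd_subset _ _))

lemma forall_mem_support_toricJacobian {P : (Fin 2 → ℤ) → Prop} {f g : LaurentPoly2 K}
    (h : ∀ b ∈ f.coeff.support, ∀ c ∈ g.coeff.support, P (b + c)) :
    ∀ a ∈ (toricJacobian f g).coeff.support, P a := by
  classical
  intro a ha
  obtain ⟨b, hb, c, hc, rfl⟩ := Finset.mem_add.mp (support_toricJacobian_subset f g ha)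
  exact h b hb c hc

end ToricJacobian

section InitialForm

variable {η : Fin 2 → ℤ} {g : LaurentPoly2 K} {a b : Fin 2 → ℤ}

lemma coeff_initialForm (η : Fin 2 → ℤ) (g : LaurentPoly2 K) (a : Fin 2 → ℤ) :
    (initialForm η g).coeff a =
      if ∀ b ∈ g.coeff.support, η ⬝ᵥ a ≤ η ⬝ᵥ b then g.coeff a else 0 := by
  classical
  rw [initialForm, AddMonoidAlgebra.coeff_ofCoeff, Finset.sum_apply']
  simp only [Finsupp.single_apply, Finset.sum_ite_eq', Finset.mem_filter, mem_support_iff]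
  by_cases ha : g.coeff a = 0 <;> simp [ha, dotProduct]

lemma mem_support_initialForm :
    a ∈ (initialForm η g).coeff.support ↔
      a ∈ g.coeff.support ∧ ∀ b ∈ g.coeff.support, η ⬝ᵥ a ≤ η ⬝ᵥ b := by
  rw [mem_support_iff, mem_support_iff, coeff_initialForm]
  split_ifs with h
  · exact (and_iff_left h).symm
  · exact iff_of_false (fun h0 => h0 rfl) fun h' => h h'.2

lemma dotProduct_le_of_mem_support_initialForm (ha : a ∈ (initialForm η g).coeff.support)
    (hb : b ∈ g.coeff.support) : η ⬝ᵥ a ≤ η ⬝ᵥ b :=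
  (mem_support_initialForm.mp ha).2 b hb

lemma dotProduct_eq_of_mem_support_initialForm (ha : a ∈ (initialForm η g).coeff.support)
    (hb : b ∈ (initialForm η g).coeff.support) : η ⬝ᵥ a = η ⬝ᵥ b :=
  le_antisymm (dotProduct_le_of_mem_support_initialForm ha (mem_support_initialForm.mp hb).1)
    (dotProduct_le_of_mem_support_initialForm hb (mem_support_initialForm.mp ha).1)

lemma dotProduct_lt_of_mem_support_sub_initialForm (ha : a ∈ (initialForm η g).coeff.support)
    (hb : b ∈ (g - initialForm η g).coeff.support) : η ⬝ᵥ a < η ⬝ᵥ b := by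
  rw [mem_support_iff, AddMonoidAlgebra.coeff_sub, Finsupp.sub_apply, coeff_initialForm] at hb
  split_ifs at hb with hmin
  · exact absurd (sub_self _) hb
  · push Not at hmin
    obtain ⟨c, hc, hcb⟩ := hmin
    exact (dotProduct_le_of_mem_support_initialForm ha hc).trans_lt hcb

lemma initialForm_add_eq_left {p r : LaurentPoly2 K} {ν : ℤ} (hp : p ≠ 0)
    (hp_wt : ∀ a ∈ p.coeff.support, η ⬝ᵥ a = ν) (hr_wt : ∀ a ∈ r.coeff.support, ν < η ⬝ᵥ a) :
    initialForm η (p + r) = p := by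
  have hr_zero : ∀ a, η ⬝ᵥ a ≤ ν → r.coeff a = 0 := fun a ha =>
    notMem_support_iff.mp fun hr => (hr_wt a hr).not_ge ha
  obtain ⟨a₀, ha₀⟩ := support_nonempty_iff.mpr (mt AddMonoidAlgebra.coeff_eq_zero.mp hp)
  have ha₀_wt := hp_wt a₀ ha₀
  have ha₀_mem : a₀ ∈ (p + r).coeff.support := by
    rw [mem_support_iff, AddMonoidAlgebra.coeff_add, Finsupp.add_apply, hr_zero a₀ ha₀_wt.le,
      add_zero]
    exact mem_support_iff.mp ha₀
  ext a
  rw [coeff_initialForm, AddMonoidAlgebra.coeff_add, Finsupp.add_apply]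
  by_cases ha : η ⬝ᵥ a ≤ ν
  · rw [if_pos, hr_zero a ha, add_zero]
    intro b hb
    rcases Finset.mem_union.mp (support_add hb) with hb | hb
    · exact ha.trans (hp_wt b hb).ge
    · exact ha.trans (hr_wt b hb).le
  · rw [if_neg fun hmin => ha (ha₀_wt ▸ hmin a₀ ha₀_mem)]
    exact (notMem_support_iff.mp fun hpa => ha (hp_wt a hpa).le).symm

end InitialForm

end LaurentPoly2

open LaurentPoly2 in
/-- Taking initial forms commutes with the toric Jacobian, provided the toric Jacobian
of the initial forms is nonzero: `(J^T_{f₁,f₂})^η = J^T_{f₁^η, f₂^η}`. -/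
theorem initialForm_toricJacobian {K : Type*} [CommRing K]
    (f₁ f₂ : LaurentPoly2 K) (η : Fin 2 → ℤ)
    (h : toricJacobian (initialForm η f₁) (initialForm η f₂) ≠ 0) :
    initialForm η (toricJacobian f₁ f₂)
      = toricJacobian (initialForm η f₁) (initialForm η f₂) := by
  classical
  set p₁ := initialForm η f₁
  set p₂ := initialForm η f₂
  obtain ⟨a, ha⟩ := support_nonempty_iff.mpr (mt AddMonoidAlgebra.coeff_eq_zero.mp h)
  obtain ⟨a₁, ha₁, a₂, ha₂, -⟩ := Finset.mem_add.mp (support_toricJacobian_subset p₁ p₂ ha)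
  have hsplit : toricJacobian f₁ f₂ = toricJacobian p₁ p₂ +
      (toricJacobian (f₁ - p₁) p₂ + toricJacobian f₁ (f₂ - p₂)) := by
    simp only [toricJacobian_sub_left, toricJacobian_sub_right]; abel
  rw [hsplit]
  refine initialForm_add_eq_left (ν := η ⬝ᵥ a₁ + η ⬝ᵥ a₂) h ?_ fun a ha => ?_
  · refine forall_mem_support_toricJacobian fun b hb c hc => ?_
    rw [dotProduct_add, dotProduct_eq_of_mem_support_initialForm hb ha₁,
      dotProduct_eq_of_mem_support_initialForm hc ha₂]
  rw [AddMonoidAlgebra.coeff_add] at ha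
  rcases Finset.mem_union.mp (support_add ha) with ha | ha
  · refine forall_mem_support_toricJacobian (P := (_ < η ⬝ᵥ ·)) (fun b hb c hc => ?_) a ha
    rw [dotProduct_add, dotProduct_eq_of_mem_support_initialForm hc ha₂]
    linarith [dotProduct_lt_of_mem_support_sub_initialForm ha₁ hb]
  · refine forall_mem_support_toricJacobian (P := (_ < η ⬝ᵥ ·)) (fun b hb c hc => ?_) a ha
    rw [dotProduct_add]
    linarith [dotProduct_le_of_mem_support_initialForm ha₁ hb,
      dotProduct_lt_of_mem_support_sub_initialForm ha₂ hc]
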